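/- arXiv:1306.5008 — 3 statements merged into one kernel-verified Lean document; each statement's English description precedes it below -/
import Mathlib

section
/- Let n ≥ 4. In the (−1)^{i+1}CL order on elements of S_n the following hold: (1) for every σ ≠ id, id is larger than σ; (2) for every odd permutation σ that is not a transposition, a transposition is larger than σ; (3) if n is even, then every σ whose cycle type is not (2^{n/2}) is larger than a permutation of type (2^{n/2}), and every σ of the opposite sign to (2^{n/2}) whose cycle type is not (2^{(n−4)/2}, 4) is larger than a permutation of type (2^{(n−4)/2}, 4); (4) if n is odd, then every σ whose cycle type is not (2^{(n−3)/2}, 3) is larger than a permutation of type (2^{(n−3)/2}, 3), and every σ of the opposite sign to (2^{(n−3)/2}, 3) whose cycle type is not (2^{(n−5)/2}, 5) is larger than a permutation of type (2^{(n−5)/2}, 5). -/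
/-- `cycleCount σ k` is the number of `k`-cycles in the disjoint cycle decomposition
of `σ` (for `k = 1` this is the number of fixed points). -/
def cycleCount {n : ℕ} (σ : Equiv.Perm (Fin n)) (k : ℕ) : ℕ :=
  if k = 1 then n - σ.cycleType.sum else Multiset.count k σ.cycleType

/-- The `(-1)^{i+1}`-cycle-lexicographic order: `σ` is larger than `τ` iff at the first
cycle size `i` where the cycle types differ, either `i` is odd and `σ` has more
`i`-cycles, or `i` is even and `σ` has fewer `i`-cycles. -/
def ACLgt {n : ℕ} (σ τ : Equiv.Perm (Fin n)) : Prop :=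
  ∃ i : ℕ, (∀ k < i, cycleCount σ k = cycleCount τ k) ∧
    ((Odd i ∧ cycleCount τ i < cycleCount σ i) ∨ (Even i ∧ cycleCount σ i < cycleCount τ i))

private lemma msum_ge {m : Multiset ℕ} {c : ℕ} (h : ∀ x ∈ m, c ≤ x) :
    Multiset.card m * c ≤ m.sum := by
  simpa [smul_eq_mul] using Multiset.card_nsmul_le_sum h

private lemma decomp (m : Multiset ℕ) (hm : ∀ x ∈ m, 2 ≤ x) :
    ∃ t : Multiset ℕ, m = Multiset.replicate (m.count 2) 2 + t ∧
      (∀ x ∈ t, 3 ≤ x) ∧ m.sum = 2 * m.count 2 + t.sum := by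
  refine ⟨m.filter (¬ · = 2), ?_, ?_, ?_⟩
  · rw [← Multiset.filter_eq']
    exact (Multiset.filter_add_not _ m).symm
  · intro x hx
    rw [Multiset.mem_filter] at hx
    have := hm x hx.1
    have := hx.2
    omega
  · conv_lhs => rw [← Multiset.filter_add_not (· = 2) m]
    rw [Multiset.sum_add, Multiset.filter_eq', Multiset.sum_replicate]
    simp [mul_comm]

private lemma small3 {t : Multiset ℕ} (ht : ∀ x ∈ t, 3 ≤ x) (hs : t.sum ≤ 5) :
    t = 0 ∨ t = {t.sum} := by
  have h3 := msum_ge ht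
  have hc : Multiset.card t ≤ 1 := by omega
  interval_cases h : Multiset.card t
  · exact Or.inl (Multiset.card_eq_zero.1 h)
  · obtain ⟨a, rfl⟩ := Multiset.card_eq_one.1 h
    exact Or.inr (by simp)

private lemma cc0 {n : ℕ} (σ : Equiv.Perm (Fin n)) : cycleCount σ 0 = 0 := by
  have : cycleCount σ 0 = Multiset.count 0 σ.cycleType := rfl
  rw [this]
  refine Multiset.count_eq_zero.2 fun h => ?_
  have := Equiv.Perm.two_le_of_mem_cycleType h
  omega

private lemma sum_le_n {n : ℕ} (σ : Equiv.Perm (Fin n)) : σ.cycleType.sum ≤ n := by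
  rw [Equiv.Perm.sum_cycleType]
  simpa using Finset.card_le_univ σ.support

private lemma aclgt_one {n : ℕ} {σ ρ : Equiv.Perm (Fin n)}
    (h : n - ρ.cycleType.sum < n - σ.cycleType.sum) : ACLgt σ ρ := by
  refine ⟨1, ?_, Or.inl ⟨odd_one, ?_⟩⟩
  · intro k hk
    interval_cases k
    rw [cc0, cc0]
  · simpa [cycleCount] using h

private lemma aclgt_two {n : ℕ} {σ ρ : Equiv.Perm (Fin n)}
    (hσ : σ.cycleType.sum = n) (hρ : ρ.cycleType.sum = n)
    (h2 : σ.cycleType.count 2 < ρ.cycleType.count 2) : ACLgt σ ρ := by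
  refine ⟨2, ?_, Or.inr ⟨even_two, ?_⟩⟩
  · intro k hk
    interval_cases k
    · rw [cc0, cc0]
    · simp [cycleCount, hσ, hρ]
  · simpa [cycleCount] using h2

private lemma units_ne_neg (u : ℤˣ) : u ≠ -u := by
  rcases Int.units_eq_one_or u with h | h <;> rw [h] <;> decide

private lemma sum_pos_of_ne_one {n : ℕ} {σ : Equiv.Perm (Fin n)} (h : σ ≠ 1) :
    2 ≤ σ.cycleType.sum := by
  have h0 : σ.cycleType ≠ 0 := fun hc => h (Equiv.Perm.cycleType_eq_zero.1 hc)
  obtain ⟨a, ha⟩ := Multiset.exists_mem_of_ne_zero h0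
  have h2 := Equiv.Perm.two_le_of_mem_cycleType ha
  have := Multiset.single_le_sum (fun x _ => Nat.zero_le x) a ha
  omega

private lemma neg_one_pow_eq {a b : ℕ} (h : a % 2 = b % 2) : (-1 : ℤˣ) ^ a = (-1 : ℤˣ) ^ b := by
  rw [← Nat.div_add_mod a 2, ← Nat.div_add_mod b 2, pow_add, pow_add, pow_mul, pow_mul, h]
  norm_num

/-- Extremes of the `(-1)^{i+1}`CL order on `S_n`: the identity is largest, a
transposition is largest among odd permutations; for `n` even the type `(2^{n/2})`
elements are smallest and the type `(2^{(n-4)/2},4)` elements are smallest within the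
opposite sign, and for `n` odd the type `(2^{(n-3)/2},3)` elements are smallest and
the type `(2^{(n-5)/2},5)` elements are smallest within the opposite sign. -/
theorem ACL_order_extremes (n : ℕ) (hn : 4 ≤ n) :
    (∀ σ : Equiv.Perm (Fin n), σ ≠ 1 → ACLgt 1 σ) ∧
    (∀ σ τ0 : Equiv.Perm (Fin n), Equiv.Perm.sign σ = -1 → σ.cycleType ≠ {2} →
      τ0.cycleType = {2} → ACLgt τ0 σ) ∧
    (Even n →
      (∀ σ ρ : Equiv.Perm (Fin n), σ.cycleType ≠ Multiset.replicate (n / 2) 2 →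
        ρ.cycleType = Multiset.replicate (n / 2) 2 → ACLgt σ ρ) ∧
      (∀ σ ρ : Equiv.Perm (Fin n), Equiv.Perm.sign σ = -((-1 : ℤˣ) ^ (n / 2)) →
        σ.cycleType ≠ Multiset.replicate ((n - 4) / 2) 2 + {4} →
        ρ.cycleType = Multiset.replicate ((n - 4) / 2) 2 + {4} → ACLgt σ ρ)) ∧
    (Odd n →
      (∀ σ ρ : Equiv.Perm (Fin n), σ.cycleType ≠ Multiset.replicate ((n - 3) / 2) 2 + {3} →
        ρ.cycleType = Multiset.replicate ((n - 3) / 2) 2 + {3} → ACLgt σ ρ) ∧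
      (∀ σ ρ : Equiv.Perm (Fin n), Equiv.Perm.sign σ = -((-1 : ℤˣ) ^ ((n - 3) / 2)) →
        σ.cycleType ≠ Multiset.replicate ((n - 5) / 2) 2 + {5} →
        ρ.cycleType = Multiset.replicate ((n - 5) / 2) 2 + {5} → ACLgt σ ρ)) := by
  refine ⟨?_, ?_, ?_, ?_⟩
  · -- Part 1
    intro σ hσ
    apply aclgt_one
    have h1 := sum_pos_of_ne_one hσ
    have h2 := sum_le_n σ
    rw [Equiv.Perm.cycleType_one, Multiset.sum_zero]
    omega
  · -- Part 2
    intro σ τ0 hsgn hne hτ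
    apply aclgt_one
    have h2 := sum_le_n σ
    have h3 : 2 < σ.cycleType.sum := by
      by_contra hcon
      push_neg at hcon
      have hge := msum_ge (fun x hx => Equiv.Perm.two_le_of_mem_cycleType (σ := σ) hx)
      have hc : Multiset.card σ.cycleType ≤ 1 := by omega
      interval_cases hcard : Multiset.card σ.cycleType
      · have h1 : σ = 1 := Equiv.Perm.card_cycleType_eq_zero.1 hcard
        rw [h1, Equiv.Perm.sign_one] at hsgn
        exact absurd hsgn (by decide)
      · obtain ⟨a, ha⟩ := Multiset.card_eq_one.1 hcard
        have h2a := Equiv.Perm.two_le_of_mem_cycleType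
          (show a ∈ σ.cycleType by rw [ha]; exact Multiset.mem_singleton_self a)
        have hsa : σ.cycleType.sum = a := by rw [ha, Multiset.sum_singleton]
        have : a = 2 := by omega
        exact hne (by rw [ha, this])
    rw [hτ, Multiset.sum_singleton]
    omega
  · -- Part 3: n even
    intro heven
    obtain ⟨m, hm⟩ := heven
    constructor
    · intro σ ρ hne hρ
      have hρs : ρ.cycleType.sum = n := by
        rw [hρ, Multiset.sum_replicate, smul_eq_mul]; omega
      have hρc : ρ.cycleType.count 2 = n / 2 := by
        rw [hρ, Multiset.count_replicate]; simp
      rcases lt_or_eq_of_le (sum_le_n σ) with h | h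
      · exact aclgt_one (by rw [hρs]; omega)
      obtain ⟨t, hdec, ht3, hsum⟩ :=
        decomp σ.cycleType (fun x hx => Equiv.Perm.two_le_of_mem_cycleType hx)
      set a := σ.cycleType.count 2 with ha
      by_cases hlt : a < n / 2
      · exact aclgt_two h hρs (by rw [hρc]; exact hlt)
      exfalso
      push_neg at hlt
      rcases small3 ht3 (by omega) with rfl | hts
      · simp only [Multiset.sum_zero] at hsum
        have ha' : a = n / 2 := by omega
        exact hne (by rw [hdec, ha', add_zero])
      · have hmem : t.sum ∈ t := by
          have := Multiset.mem_singleton_self t.sum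
          rwa [← hts] at this
        have hs3 := ht3 _ hmem
        omega
    · intro σ ρ hsgn hne hρ
      have hρs : ρ.cycleType.sum = n := by
        rw [hρ, Multiset.sum_add, Multiset.sum_replicate, smul_eq_mul,
          Multiset.sum_singleton]; omega
      have hρc : ρ.cycleType.count 2 = (n - 4) / 2 := by
        rw [hρ, Multiset.count_add, Multiset.count_replicate, Multiset.count_singleton]
        norm_num
      rcases lt_or_eq_of_le (sum_le_n σ) with h | h
      · exact aclgt_one (by rw [hρs]; omega)
      obtain ⟨t, hdec, ht3, hsum⟩ :=
        decomp σ.cycleType (fun x hx => Equiv.Perm.two_le_of_mem_cycleType hx)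
      set a := σ.cycleType.count 2 with ha
      by_cases hlt : a < (n - 4) / 2
      · exact aclgt_two h hρs (by rw [hρc]; exact hlt)
      exfalso
      push_neg at hlt
      have hcard : Multiset.card σ.cycleType = a + Multiset.card t := by
        rw [hdec]; simp
      rcases small3 ht3 (by omega) with rfl | hts
      · -- t = 0 : σ has type 2^(n/2), wrong sign
        simp only [Multiset.sum_zero] at hsum
        simp only [Multiset.card_zero, add_zero] at hcard
        have hE : (σ.cycleType.sum + Multiset.card σ.cycleType) % 2 = (n / 2) % 2 := by
          rw [h, hcard]; omega
        have h1 : (-1 : ℤˣ) ^ (σ.cycleType.sum + Multiset.card σ.cycleType) =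
            -(-1 : ℤˣ) ^ (n / 2) := by
          rw [← Equiv.Perm.sign_of_cycleType, hsgn]
        rw [neg_one_pow_eq hE] at h1
        exact units_ne_neg _ h1
      · have hmem : t.sum ∈ t := by
          have := Multiset.mem_singleton_self t.sum
          rwa [← hts] at this
        have hs3 := ht3 _ hmem
        have hs4 : t.sum = 4 := by omega
        have ha' : a = (n - 4) / 2 := by omega
        exact hne (by rw [hdec, hts, hs4, ha'])
  · -- Part 4: n odd
    intro hodd
    obtain ⟨m, hm⟩ := hodd
    constructor
    · intro σ ρ hne hρ
      have hρs : ρ.cycleType.sum = n := by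
        rw [hρ, Multiset.sum_add, Multiset.sum_replicate, smul_eq_mul,
          Multiset.sum_singleton]; omega
      rcases lt_or_eq_of_le (sum_le_n σ) with h | h
      · exact aclgt_one (by rw [hρs]; omega)
      obtain ⟨t, hdec, ht3, hsum⟩ :=
        decomp σ.cycleType (fun x hx => Equiv.Perm.two_le_of_mem_cycleType hx)
      set a := σ.cycleType.count 2 with ha
      by_cases hlt : a < (n - 3) / 2
      · refine aclgt_two h hρs ?_
        rw [hρ, Multiset.count_add, Multiset.count_replicate, Multiset.count_singleton]
        norm_num
        exact hlt
      exfalso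
      push_neg at hlt
      rcases small3 ht3 (by omega) with rfl | hts
      · simp only [Multiset.sum_zero] at hsum
        omega
      · have hmem : t.sum ∈ t := by
          have := Multiset.mem_singleton_self t.sum
          rwa [← hts] at this
        have hs3 := ht3 _ hmem
        have hs' : t.sum = 3 := by omega
        have ha' : a = (n - 3) / 2 := by omega
        exact hne (by rw [hdec, hts, hs', ha'])
    · intro σ ρ hsgn hne hρ
      have hρs : ρ.cycleType.sum = n := by
        rw [hρ, Multiset.sum_add, Multiset.sum_replicate, smul_eq_mul,
          Multiset.sum_singleton]; omega
      rcases lt_or_eq_of_le (sum_le_n σ) with h | h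
      · exact aclgt_one (by rw [hρs]; omega)
      obtain ⟨t, hdec, ht3, hsum⟩ :=
        decomp σ.cycleType (fun x hx => Equiv.Perm.two_le_of_mem_cycleType hx)
      set a := σ.cycleType.count 2 with ha
      by_cases hlt : a < (n - 5) / 2
      · refine aclgt_two h hρs ?_
        rw [hρ, Multiset.count_add, Multiset.count_replicate, Multiset.count_singleton]
        norm_num
        exact hlt
      exfalso
      push_neg at hlt
      have hcard : Multiset.card σ.cycleType = a + Multiset.card t := by
        rw [hdec]; simp
      rcases small3 ht3 (by omega) with rfl | hts
      · simp only [Multiset.sum_zero] at hsum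
        omega
      · have hmem : t.sum ∈ t := by
          have := Multiset.mem_singleton_self t.sum
          rwa [← hts] at this
        have hs3 := ht3 _ hmem
        have hcard1 : Multiset.card t = 1 := by rw [hts]; simp
        have hs35 : t.sum = 3 ∨ t.sum = 5 := by omega
        rcases hs35 with hs' | hs'
        · -- type (2^((n-3)/2), 3) : wrong sign
          have hE : (σ.cycleType.sum + Multiset.card σ.cycleType) % 2 =
              ((n - 3) / 2) % 2 := by
            rw [h, hcard, hcard1]; omega
          have h1 : (-1 : ℤˣ) ^ (σ.cycleType.sum + Multiset.card σ.cycleType) =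
              -(-1 : ℤˣ) ^ ((n - 3) / 2) := by
            rw [← Equiv.Perm.sign_of_cycleType, hsgn]
          rw [neg_one_pow_eq hE] at h1
          exact units_ne_neg _ h1
        · have ha' : a = (n - 5) / 2 := by omega
          exact hne (by rw [hdec, hts, hs', ha'])
end

section
/- Let λ = (λ_1 ≥ λ_2 ≥ … ≥ λ_r > 0) be a partition with conjugate partition λ′, and let k = #{j : λ_j ≥ j} be the size of its Durfee square. Then, as integers, Σ_{j=1}^{r} [(λ_j − j)(λ_j − j + 1)(2λ_j − 2j + 1) + j(j − 1)(2j − 1)] = Σ_{j=1}^{k} [(λ_j − j)(λ_j − j + 1)(2(λ_j − j) + 1) + (λ′_j − j)(λ′_j − j + 1)(2(λ′_j − j) + 1)]. (In Frobenius coordinates λ = (α_1,…,α_k | β_1,…,β_k) with α_j = λ_j − j and β_j = λ′_j − j, the common value is Σ_{j=1}^k [α_j(α_j+1)(2α_j+1) + β_j(β_j+1)(2β_j+1)].) -/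
/-!
Write `T x = x (x + 1) (2x + 1)`, so that `T x - T (x - 1) = 6 x²`. Telescoping, the `j`-th
summand on the left is `T (λ_j - j) + T (j - 1) = 6 Σ (m - j)²` over the cells `(j, m)` of row `j`
of the Young diagram, i.e. six times the sum of the squared contents of that row. Cutting the
diagram instead into its `k` diagonal hooks, the `j`-th hook has arm contents `1, …, α_j` and leg
contents `0, -1, …, -β_j`, so it contributes `T α_j + T β_j`.
-/

open Finset

/-- The `j`-th part (1-indexed) of a partition given as a list of parts in decreasing
order, padded with zeros beyond the end. -/
def part (l : List ℕ) (j : ℕ) : ℕ := l.getD (j - 1) 0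

/-- The `j`-th part (1-indexed) of the conjugate partition: `λ′_j = #{m : λ_m ≥ j}`. -/
def conjPart (l : List ℕ) (j : ℕ) : ℕ := (l.filter (fun x => j ≤ x)).length

/-- The size of the Durfee square of a partition: `#{j : λ_j ≥ j}`. -/
def durfee (l : List ℕ) : ℕ :=
  ((Finset.Icc 1 l.length).filter (fun j => j ≤ part l j)).card

theorem six_mul_sum_Icc_sub_sq (c : ℤ) {a b : ℕ} (hab : a ≤ b + 1) :
    6 * ∑ m ∈ Icc a b, ((m : ℤ) - c) ^ 2 =
      ((b : ℤ) - c) * ((b : ℤ) - c + 1) * (2 * ((b : ℤ) - c) + 1)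
        - ((a : ℤ) - 1 - c) * ((a : ℤ) - c) * (2 * ((a : ℤ) - 1 - c) + 1) := by
  set F : ℕ → ℤ := fun n => ((n : ℤ) - 1 - c) * ((n : ℤ) - c) * (2 * ((n : ℤ) - 1 - c) + 1)
  have step : ∀ m : ℕ, 6 * ((m : ℤ) - c) ^ 2 = F (m + 1) - F m := by
    intro m
    simp only [F]
    push_cast
    ring
  rw [mul_sum, sum_congr rfl fun m _ => step m, ← Ico_add_one_right_eq_Icc, sum_Ico_sub F hab]
  simp only [F]
  push_cast
  ring

theorem Finset.le_card_filter_Icc_one_iff {p : ℕ → Prop} [DecidablePred p]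
    (hp : ∀ i j, 1 ≤ i → i ≤ j → p j → p i) {n j : ℕ} (hj : 1 ≤ j) :
    j ≤ #{i ∈ Icc 1 n | p i} ↔ j ≤ n ∧ p j := by
  constructor
  · intro h
    by_contra hfalse
    have hsub : {i ∈ Icc 1 n | p i} ⊆ Icc 1 (j - 1) := by
      intro i hi
      simp only [mem_filter, mem_Icc] at hi ⊢
      by_contra
      exact hfalse ⟨by omega, hp j i hj (by omega) hi.2⟩
    have := card_le_card hsub
    simp only [Nat.card_Icc] at this
    omega
  · rintro ⟨hjn, hpj⟩
    calc j = #(Icc 1 j) := by simp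
      _ ≤ _ := card_le_card fun i hi => by
        simp only [mem_filter, mem_Icc] at hi ⊢
        exact ⟨⟨hi.1, by omega⟩, hp i j hi.1 hi.2 hpj⟩

section Partition

variable {l : List ℕ}

theorem le_length_of_part_ne_zero {j : ℕ} (h : part l j ≠ 0) : j ≤ l.length := by
  by_contra hj
  exact h (List.getD_eq_default _ _ (by omega))

theorem part_le_part (hs : l.Pairwise (· ≥ ·)) {i j : ℕ} (hi : 1 ≤ i) (hij : i ≤ j) :
    part l j ≤ part l i := by
  rcases lt_or_ge (j - 1) l.length with hj | hj
  · rw [part, part, List.getD_eq_getElem _ _ hj, List.getD_eq_getElem _ _ (by omega)]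
    exact hs.sortedGE.antitone_get (show (⟨i - 1, by omega⟩ : Fin l.length) ≤ ⟨j - 1, hj⟩ by
      simp only [Fin.mk_le_mk]
      omega)
  · rw [part, List.getD_eq_default _ _ hj]
    exact Nat.zero_le _

theorem le_conjPart_iff (hs : l.Pairwise (· ≥ ·)) {j m : ℕ} (hj : 1 ≤ j) (hm : 1 ≤ m) :
    j ≤ conjPart l m ↔ m ≤ part l j := by
  induction l generalizing j with
  | nil => simp only [conjPart, part, List.filter_nil, List.length_nil, List.getD_nil]; omega
  | cons a t ih =>
    obtain ⟨hat, ht⟩ := List.pairwise_cons.mp hs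
    by_cases ha : m ≤ a
    · have hc : conjPart (a :: t) m = conjPart t m + 1 := by
        simp [conjPart, ha]
      obtain _ | _ | j := j
      · omega
      · simp [hc, part, ha]
      · rw [hc, show part (a :: t) (j + 2) = part t (j + 1) from rfl, ← ih ht (by omega)]
        omega
    · have hc : conjPart (a :: t) m = 0 := by
        simp only [conjPart, List.filter_cons, ha, decide_false, Bool.false_eq_true, if_false,
          List.length_eq_zero_iff, List.filter_eq_nil_iff, decide_eq_true_eq]
        exact fun b hb => by have := hat b hb; omega
      have hle : part (a :: t) j ≤ a := part_le_part hs le_rfl hj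
      omega

theorem le_durfee_iff (hs : l.Pairwise (· ≥ ·)) {j : ℕ} (hj : 1 ≤ j) :
    j ≤ durfee l ↔ j ≤ part l j := by
  rw [durfee, le_card_filter_Icc_one_iff (fun i j hi hij hj => hij.trans
    (hj.trans (part_le_part hs hi hij))) hj]
  exact ⟨And.right, fun h => ⟨le_length_of_part_ne_zero (by omega), h⟩⟩

theorem durfee_le_length (l : List ℕ) : durfee l ≤ l.length :=
  (card_filter_le _ _).trans (by simp)

theorem sum_cells_eq_sum_hooks {M : Type*} [AddCommMonoid M] (hs : l.Pairwise (· ≥ ·))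
    (f : ℕ → ℕ → M) :
    ∑ j ∈ Icc 1 l.length, ∑ m ∈ Icc 1 (part l j), f j m =
      ∑ j ∈ Icc 1 (durfee l),
        (∑ m ∈ Icc (j + 1) (part l j), f j m + ∑ i ∈ Icc j (conjPart l j), f i j) := by
  have split : ∀ j, ∑ m ∈ Icc 1 (part l j), f j m =
      ∑ m ∈ Icc 1 (part l j) with m ≤ j, f j m + ∑ m ∈ Icc (j + 1) (part l j), f j m := by
    intro j
    rw [← sum_filter_add_sum_filter_not (Icc 1 (part l j)) (· ≤ j)]
    congr 2
    ext m
    simp only [mem_filter, mem_Icc]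
    omega
  have arms : ∑ j ∈ Icc 1 l.length, ∑ m ∈ Icc (j + 1) (part l j), f j m =
      ∑ j ∈ Icc 1 (durfee l), ∑ m ∈ Icc (j + 1) (part l j), f j m := by
    refine (sum_subset (Icc_subset_Icc_right (durfee_le_length l)) fun j hj hjk => ?_).symm
    simp only [mem_Icc, not_and, not_le] at hj hjk
    have : part l j < j := not_le.mp ((le_durfee_iff hs hj.1).not.mp (hjk hj.1).not_ge)
    rw [Icc_eq_empty (by omega), sum_empty]
  have legs : ∑ j ∈ Icc 1 l.length, ∑ m ∈ Icc 1 (part l j) with m ≤ j, f j m =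
      ∑ m ∈ Icc 1 (durfee l), ∑ i ∈ Icc m (conjPart l m), f i m := by
    refine sum_comm' fun j m => ?_
    simp only [mem_filter, mem_Icc]
    constructor
    · rintro ⟨⟨hj, -⟩, ⟨hm, hmj⟩, hjm⟩
      have hmm : m ≤ part l m := hmj.trans (part_le_part hs hm hjm)
      exact ⟨⟨hjm, (le_conjPart_iff hs hj hm).mpr hmj⟩, hm, (le_durfee_iff hs hm).mpr hmm⟩
    · rintro ⟨⟨hmj, hjc⟩, hm, -⟩
      have hmj' : m ≤ part l j := (le_conjPart_iff hs (by omega) hm).mp hjc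
      exact ⟨⟨by omega, le_length_of_part_ne_zero (by omega)⟩, ⟨hm, hmj'⟩, hmj⟩
  rw [sum_congr rfl fun j _ => split j, sum_add_distrib, arms, legs, ← sum_add_distrib]
  exact sum_congr rfl fun j _ => add_comm _ _

end Partition

theorem M3_frobenius_general (l : List ℕ) (hs : l.Pairwise (· ≥ ·)) :
    ∑ j ∈ Finset.Icc 1 l.length,
      (((part l j : ℤ) - j) * ((part l j : ℤ) - j + 1) * (2 * (part l j : ℤ) - 2 * j + 1)
        + (j : ℤ) * ((j : ℤ) - 1) * (2 * (j : ℤ) - 1)) =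
    ∑ j ∈ Finset.Icc 1 (durfee l),
      (((part l j : ℤ) - j) * ((part l j : ℤ) - j + 1) * (2 * ((part l j : ℤ) - j) + 1)
        + ((conjPart l j : ℤ) - j) * ((conjPart l j : ℤ) - j + 1)
          * (2 * ((conjPart l j : ℤ) - j) + 1)) := by
  have row : ∀ j : ℕ,
      ((part l j : ℤ) - j) * ((part l j : ℤ) - j + 1) * (2 * (part l j : ℤ) - 2 * j + 1)
        + (j : ℤ) * ((j : ℤ) - 1) * (2 * (j : ℤ) - 1) =
      6 * ∑ m ∈ Icc 1 (part l j), ((m : ℤ) - j) ^ 2 := by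
    intro j
    rw [six_mul_sum_Icc_sub_sq _ (by omega)]
    push_cast
    ring
  have hook : ∀ j ∈ Icc 1 (durfee l),
      ((part l j : ℤ) - j) * ((part l j : ℤ) - j + 1) * (2 * ((part l j : ℤ) - j) + 1)
        + ((conjPart l j : ℤ) - j) * ((conjPart l j : ℤ) - j + 1)
          * (2 * ((conjPart l j : ℤ) - j) + 1) =
      6 * (∑ m ∈ Icc (j + 1) (part l j), ((m : ℤ) - j) ^ 2
        + ∑ i ∈ Icc j (conjPart l j), ((j : ℤ) - i) ^ 2) := by
    intro j hj
    obtain ⟨hj1, hjk⟩ := mem_Icc.mp hj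
    have harm : j ≤ part l j := (le_durfee_iff hs hj1).mp hjk
    have hleg : j ≤ conjPart l j := (le_conjPart_iff hs hj1 hj1).mpr harm
    simp_rw [sub_sq_comm (j : ℤ)]
    rw [mul_add (6 : ℤ), six_mul_sum_Icc_sub_sq (j : ℤ) (a := j + 1) (by omega),
      six_mul_sum_Icc_sub_sq (j : ℤ) (a := j) (by omega)]
    push_cast
    ring
  rw [sum_congr rfl fun j _ => row j, sum_congr rfl hook, ← mul_sum, ← mul_sum,
    sum_cells_eq_sum_hooks hs]

/-- The quantity `M_3` of a partition rewritten in Frobenius coordinates: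
`Σ_{j=1}^{r} [(λ_j − j)(λ_j − j + 1)(2λ_j − 2j + 1) + j(j − 1)(2j − 1)]
  = Σ_{j=1}^{k} [α_j(α_j+1)(2α_j+1) + β_j(β_j+1)(2β_j+1)]`,
where `k` is the Durfee square size, `α_j = λ_j − j` and `β_j = λ′_j − j`. -/
theorem M3_frobenius (l : List ℕ) (hs : l.Pairwise (· ≥ ·)) (hpos : ∀ x ∈ l, 0 < x) :
    ∑ j ∈ Finset.Icc 1 l.length,
      (((part l j : ℤ) - j) * ((part l j : ℤ) - j + 1) * (2 * (part l j : ℤ) - 2 * j + 1)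
        + (j : ℤ) * ((j : ℤ) - 1) * (2 * (j : ℤ) - 1)) =
    ∑ j ∈ Finset.Icc 1 (durfee l),
      (((part l j : ℤ) - j) * ((part l j : ℤ) - j + 1) * (2 * ((part l j : ℤ) - j) + 1)
        + ((conjPart l j : ℤ) - j) * ((conjPart l j : ℤ) - j + 1)
          * (2 * ((conjPart l j : ℤ) - j) + 1)) :=
  M3_frobenius_general l hs
end

section
/- Let n ≥ 3 and let i be an integer with 1 ≤ i ≤ (n−1)/2. Let ρ^i denote the hook partition (n−i, 1, 1, …, 1) of n with i parts equal to 1. Then for every partition λ of n that is an i-cycle detector and satisfies λ_1 ≥ λ′_1, one has M_3(λ) ≤ M_3(ρ^i). -/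
/-- `λ` is an `i`-cycle detector if the hooks at cells `(2,1)` and `(1,2)` both have
length at least `i`, i.e. `λ_2 + λ′_1 − 2 ≥ i` and `λ′_2 + λ_1 − 2 ≥ i`. -/
def IsCycleDetector (l : List ℕ) (i : ℕ) : Prop :=
  i + 2 ≤ part l 2 + conjPart l 1 ∧ i + 2 ≤ conjPart l 2 + part l 1

/-- `M_3(λ) = Σ_{j=1}^{r} [(λ_j − j)(λ_j − j + 1)(2λ_j − 2j + 1) + j(j − 1)(2j − 1)]`. -/
def M3 (l : List ℕ) : ℤ :=
  ∑ j ∈ Finset.Icc 1 l.length,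
    (((part l j : ℤ) - j) * ((part l j : ℤ) - j + 1) * (2 * (part l j : ℤ) - 2 * j + 1)
      + (j : ℤ) * ((j : ℤ) - 1) * (2 * (j : ℤ) - 1))

/-- The hook partition `ρ^i = (n − i, 1, …, 1)` of `n` with `i` parts equal to `1`. -/
def hookPart (n i : ℕ) : List ℕ := (n - i) :: List.replicate i 1

/-!
`M3 l` is six times the sum of the squared contents `m - j` of the cells `(j, m)` (row `j`,
column `m`) of the Young diagram. Since `d² = Σ_{k=1}^{d} (2k - 1)`, this gives
`M3 l = 6 Σ_k (2k - 1) · farCount l k`, where `farCount l k` counts the cells whose content is at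
least `k` in absolute value, so it suffices to bound these counts by those of the hook,
`(n - i - k)₊ + (i + 1 - k)₊`. If `k > λ₁ ≥ λ′₁` there is no such cell. Otherwise (for `k ≥ 2`)
the first two rows and the first column hold at least `k + min(λ₂, k + 1) + min(λ′₁, k) - 2`
cells of content less than `k` in absolute value, and the hook condition `λ₂ + λ′₁ ≥ i + 2`
makes this at least `n` minus the count of the hook.
-/

open Finset

section Parts

variable {l : List ℕ}

theorem part_antitone (hs : l.Pairwise (· ≥ ·)) : Antitone (part l) := by
  intro a b hab
  unfold part
  rcases lt_or_ge (b - 1) l.length with hb | hb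
  · rw [List.getD_eq_getElem _ _ hb, List.getD_eq_getElem _ _ (by omega)]
    exact List.sortedGE_iff_getElem_ge_getElem_of_le.mp hs.sortedGE (by omega)
  · rw [List.getD_eq_default _ _ hb]
    exact Nat.zero_le _

theorem part_mem {j : ℕ} (h1 : 1 ≤ j) (h2 : j ≤ l.length) : part l j ∈ l := by
  rw [part, List.getD_eq_getElem _ _ (by omega)]
  exact List.getElem_mem _

theorem part_le_sum (j : ℕ) : part l j ≤ l.sum := by
  rcases lt_or_ge (j - 1) l.length with h | h
  · rw [part, List.getD_eq_getElem _ _ h]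
    exact List.le_sum_of_mem (List.getElem_mem _)
  · rw [part, List.getD_eq_default _ _ h]
    exact Nat.zero_le _

theorem sum_Icc_part (l : List ℕ) : ∑ j ∈ Icc 1 l.length, part l j = l.sum := by
  rw [← Fin.sum_univ_getElem, ← Ico_add_one_right_eq_Icc, sum_Ico_eq_sum_range, sum_range]
  refine sum_congr rfl fun j _ => ?_
  rw [part, add_tsub_cancel_left, List.getD_eq_getElem]

theorem part_one_add_part_two_le_sum (l : List ℕ) : part l 1 + part l 2 ≤ l.sum := by
  rcases l with _ | ⟨x, _ | ⟨y, t⟩⟩ <;> simp [part]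

theorem part_two_eq_zero_of_length_le_one (h : l.length ≤ 1) : part l 2 = 0 :=
  List.getD_eq_default _ _ h

theorem conjPart_one_eq_length (hpos : ∀ x ∈ l, 0 < x) : conjPart l 1 = l.length :=
  congrArg List.length <| List.filter_eq_self.mpr fun x hx => by
    simpa using Nat.succ_le_of_lt (hpos x hx)

end Parts

theorem cast_dist_sq (m j : ℕ) : ((Nat.dist m j : ℕ) : ℤ) ^ 2 = ((m : ℤ) - j) ^ 2 := by
  have h : ((Nat.dist m j : ℕ) : ℤ) = |(m : ℤ) - j| := by
    rw [abs_eq_max_neg, Nat.dist]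
    omega
  rw [h, sq_abs]

theorem sum_Icc_two_mul_sub_one (d : ℕ) : ∑ k ∈ Icc 1 d, (2 * (k : ℤ) - 1) = d ^ 2 := by
  induction d with
  | zero => simp
  | succ d ih =>
    rw [sum_Icc_succ_top (by omega), ih]
    push_cast
    ring

theorem sq_eq_sum_Icc_ite {d K : ℕ} (hd : d ≤ K) :
    (d : ℤ) ^ 2 = ∑ k ∈ Icc 1 K, if k ≤ d then 2 * (k : ℤ) - 1 else 0 := by
  rw [← sum_filter, ← sum_Icc_two_mul_sub_one]
  congr 1
  ext k
  simp only [mem_filter, mem_Icc]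
  omega

-- The right side is `F(p - j) - F(-j)` for `F(b) = b(b+1)(2b+1)`, and `F(b) = 6 Σ_{c=1}^{b} c²`.
theorem six_mul_sum_Icc_sq_sub (p j : ℕ) :
    6 * ∑ m ∈ Icc 1 p, ((m : ℤ) - j) ^ 2 =
      ((p : ℤ) - j) * ((p : ℤ) - j + 1) * (2 * (p : ℤ) - 2 * j + 1)
        + (j : ℤ) * ((j : ℤ) - 1) * (2 * (j : ℤ) - 1) := by
  induction p with
  | zero => simp; ring
  | succ p ih =>
    rw [sum_Icc_succ_top (by omega), mul_add, ih]
    push_cast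
    ring

theorem M3_eq_six_mul_sum_sq (l : List ℕ) :
    M3 l = 6 * ∑ j ∈ Icc 1 l.length, ∑ m ∈ Icc 1 (part l j), ((m : ℤ) - j) ^ 2 := by
  rw [M3, mul_sum]
  exact sum_congr rfl fun j _ => (six_mul_sum_Icc_sq_sub _ _).symm

def farCount (l : List ℕ) (k : ℕ) : ℕ :=
  ∑ j ∈ Icc 1 l.length, #{m ∈ Icc 1 (part l j) | k ≤ Nat.dist m j}

theorem M3_eq_sum_farCount (l : List ℕ) {K : ℕ} (hlen : l.length ≤ K) (hsum : l.sum ≤ K) :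
    M3 l = 6 * ∑ k ∈ Icc 1 K, (2 * (k : ℤ) - 1) * farCount l k := by
  rw [M3_eq_six_mul_sum_sq]
  congr 1
  calc ∑ j ∈ Icc 1 l.length, ∑ m ∈ Icc 1 (part l j), ((m : ℤ) - j) ^ 2
      = ∑ j ∈ Icc 1 l.length, ∑ m ∈ Icc 1 (part l j), ∑ k ∈ Icc 1 K,
          if k ≤ Nat.dist m j then 2 * (k : ℤ) - 1 else 0 := by
        refine sum_congr rfl fun j hj => sum_congr rfl fun m hm => ?_
        have hm : m ≤ l.sum := (mem_Icc.mp hm).2.trans (part_le_sum j)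
        have hj := (mem_Icc.mp hj).2
        have hdist : Nat.dist m j ≤ K := by
          rw [Nat.dist]
          omega
        rw [← cast_dist_sq, sq_eq_sum_Icc_ite hdist]
    _ = ∑ k ∈ Icc 1 K, ∑ j ∈ Icc 1 l.length, ∑ m ∈ Icc 1 (part l j),
          if k ≤ Nat.dist m j then 2 * (k : ℤ) - 1 else 0 := by
        rw [sum_comm]
        exact sum_congr rfl fun j _ => sum_comm
    _ = ∑ k ∈ Icc 1 K, (2 * (k : ℤ) - 1) * farCount l k := by
        refine sum_congr rfl fun k _ => ?_
        simp only [farCount, Nat.cast_sum, mul_sum, ← sum_filter, sum_const, nsmul_eq_mul,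
          mul_comm]

theorem M3_le_M3_of_farCount_le {l l' : List ℕ}
    (h : ∀ k, 1 ≤ k → farCount l k ≤ farCount l' k) : M3 l ≤ M3 l' := by
  set K := l.length + l.sum + l'.length + l'.sum
  rw [M3_eq_sum_farCount l (K := K) (by omega) (by omega),
    M3_eq_sum_farCount l' (K := K) (by omega) (by omega)]
  gcongr with k hk
  · have := (mem_Icc.mp hk).1
    omega
  · exact_mod_cast h k (mem_Icc.mp hk).1

theorem length_hookPart (n i : ℕ) : (hookPart n i).length = i + 1 := by
  simp [hookPart]

theorem part_hookPart_of_two_le {n i j : ℕ} (h2 : 2 ≤ j) (hj : j ≤ i + 1) :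
    part (hookPart n i) j = 1 := by
  obtain ⟨j, rfl⟩ := Nat.exists_eq_add_of_le' h2
  simp [part, hookPart, show j < i by omega]

theorem farCount_hookPart (n i : ℕ) {k : ℕ} (hk : 1 ≤ k) :
    farCount (hookPart n i) k = (n - i - k) + (i + 1 - k) := by
  rw [farCount, length_hookPart, ← sum_Ioc_add_eq_sum_Icc (by omega), add_comm]
  congr 1
  · show #{m ∈ Icc 1 (n - i) | k ≤ Nat.dist m 1} = n - i - k
    suffices {m ∈ Icc 1 (n - i) | k ≤ Nat.dist m 1} = Icc (k + 1) (n - i) by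
      rw [this, Nat.card_Icc]
      omega
    ext m
    rw [mem_filter, mem_Icc, mem_Icc, Nat.dist]
    omega
  · calc ∑ j ∈ Ioc 1 (i + 1), #{m ∈ Icc 1 (part (hookPart n i) j) | k ≤ Nat.dist m j}
        = ∑ j ∈ Ioc 1 (i + 1), if k + 1 ≤ j then 1 else 0 := by
          refine sum_congr rfl fun j hj => ?_
          have hj := mem_Ioc.mp hj
          rw [part_hookPart_of_two_le hj.1 hj.2, Icc_self, filter_singleton, Nat.dist]
          split_ifs <;> first | rfl | omega
      _ = #(Icc (k + 1) (i + 1)) := by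
          rw [← card_filter]
          congr 1
          ext j
          rw [mem_filter, mem_Ioc, mem_Icc]
          omega
      _ = i + 1 - k := by
          rw [Nat.card_Icc]
          omega

theorem farCount_eq_zero {l : List ℕ} {k : ℕ} (hs : l.Pairwise (· ≥ ·)) (hlen : l.length ≤ k)
    (h1 : part l 1 ≤ k) : farCount l k = 0 := by
  refine sum_eq_zero fun j hj => card_eq_zero.mpr (filter_eq_empty_iff.mpr fun m hm => ?_)
  have hj := mem_Icc.mp hj
  have hm := mem_Icc.mp hm
  have := part_antitone hs hj.1
  rw [Nat.dist]
  omega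

theorem card_filter_not_le_dist (p j k : ℕ) (hjk : j ≤ k) :
    #{m ∈ Icc 1 p | ¬ k ≤ Nat.dist m j} = min p (j + k - 1) := by
  suffices {m ∈ Icc 1 p | ¬ k ≤ Nat.dist m j} = Icc 1 (min p (j + k - 1)) by
    rw [this, Nat.card_Icc, Nat.add_sub_cancel]
  ext m
  rw [mem_filter, mem_Icc, mem_Icc, Nat.dist]
  omega

theorem farCount_add_sum_min_le (l : List ℕ) (k : ℕ) :
    farCount l k + ∑ j ∈ Icc 1 (min l.length k), min (part l j) (j + k - 1) ≤ l.sum :=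
  calc farCount l k + ∑ j ∈ Icc 1 (min l.length k), min (part l j) (j + k - 1)
      = farCount l k + ∑ j ∈ Icc 1 (min l.length k),
          #{m ∈ Icc 1 (part l j) | ¬ k ≤ Nat.dist m j} := by
        congr 1
        exact sum_congr rfl fun j hj =>
          (card_filter_not_le_dist _ _ _ ((mem_Icc.mp hj).2.trans (min_le_right _ _))).symm
    _ ≤ farCount l k + ∑ j ∈ Icc 1 l.length, #{m ∈ Icc 1 (part l j) | ¬ k ≤ Nat.dist m j} := by
        gcongr
        exact min_le_left _ _
    _ = l.sum := by
        rw [farCount, ← sum_add_distrib, ← sum_Icc_part]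
        refine sum_congr rfl fun j _ => ?_
        rw [card_filter_add_card_filter_not, Nat.card_Icc, Nat.add_sub_cancel]

theorem le_sum_Icc_min_part {l : List ℕ} {k : ℕ} (hpos : ∀ x ∈ l, 0 < x)
    (hlen : 2 ≤ l.length) (hk : 2 ≤ k) :
    min (part l 1) k + min (part l 2) (k + 1) + (min l.length k - 2)
      ≤ ∑ j ∈ Icc 1 (min l.length k), min (part l j) (j + k - 1) := by
  have hrows : min l.length k - 2 ≤
      ∑ j ∈ Icc 3 (min l.length k), min (part l j) (j + k - 1) := by
    simpa using card_nsmul_le_sum (Icc 3 (min l.length k)) (fun j => min (part l j) (j + k - 1)) 1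
      fun j hj => by
      have hj := mem_Icc.mp hj
      have := hpos _ (part_mem (l := l) (by omega) (hj.2.trans (min_le_left _ _)))
      omega
  rw [← sum_Ioc_add_eq_sum_Icc (by omega), ← Icc_add_one_left_eq_Ioc,
    ← sum_Ioc_add_eq_sum_Icc (by omega), ← Icc_add_one_left_eq_Ioc]
  simp only [Nat.reduceAdd]
  omega

theorem farCount_le_farCount_hookPart {l : List ℕ} {i k : ℕ} (hs : l.Pairwise (· ≥ ·))
    (hpos : ∀ x ∈ l, 0 < x) (hdet : i + 2 ≤ part l 2 + l.length) (hwide : l.length ≤ part l 1)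
    (hk : 1 ≤ k) : farCount l k ≤ farCount (hookPart l.sum i) k := by
  rw [farCount_hookPart _ _ hk]
  rcases lt_or_ge (part l 1) k with hk1 | hk1
  · rw [farCount_eq_zero hs (by omega) hk1.le]
    exact Nat.zero_le _
  have hlen : 2 ≤ l.length := by
    by_contra! h
    rw [part_two_eq_zero_of_length_le_one (by omega)] at hdet
    omega
  have hfar := farCount_add_sum_min_le l k
  have hsum := part_one_add_part_two_le_sum l
  rcases hk.eq_or_lt with rfl | hk2
  · simp only [min_eq_right (by omega : 1 ≤ l.length), Icc_self, sum_singleton] at hfar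
    omega
  · have h2 := hpos _ (part_mem (l := l) (j := 2) (by omega) hlen)
    have := le_sum_Icc_min_part hpos hlen hk2
    omega

theorem hook_maximizes_M3_general (n i : ℕ)
    (l : List ℕ) (hs : l.Pairwise (· ≥ ·)) (hpos : ∀ x ∈ l, 0 < x) (hsum : l.sum = n)
    (hdet : IsCycleDetector l i) (hwide : conjPart l 1 ≤ part l 1) :
    M3 l ≤ M3 (hookPart n i) := by
  have hlen := conjPart_one_eq_length hpos
  subst hsum
  exact M3_le_M3_of_farCount_le fun k hk =>
    farCount_le_farCount_hookPart hs hpos (hlen ▸ hdet.1) (hlen ▸ hwide) hk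

/-- For `1 ≤ i ≤ (n−1)/2`, the hook `ρ^i = (n−i,1,…,1)` maximizes `M_3` among all
`i`-cycle detectors `λ` of `n` with `λ_1 ≥ λ′_1`. -/
theorem hook_maximizes_M3 (n i : ℕ) (hn : 3 ≤ n) (hi1 : 1 ≤ i) (hi2 : 2 * i ≤ n - 1)
    (l : List ℕ) (hs : l.Pairwise (· ≥ ·)) (hpos : ∀ x ∈ l, 0 < x) (hsum : l.sum = n)
    (hdet : IsCycleDetector l i) (hwide : conjPart l 1 ≤ part l 1) :
    M3 l ≤ M3 (hookPart n i) :=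
  hook_maximizes_M3_general n i l hs hpos hsum hdet hwide
end
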